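/- arXiv:1702.07629 — 2 statements merged into one kernel-verified Lean document; each statement's English description precedes it below -/
import Mathlib

section
/- Let A be a unital complex Banach algebra, M a unital A-bimodule, n ≥ 2, and let Δ be a 2-local derivation from M_n(A) into M_n(M) that vanishes on the linear span of the matrix units {e_{ij}}_{i,j=1}^n. Then for all 1 ≤ i, j ≤ n, Δ maps the subspace A_{ij} = e_{ii} M_n(A) e_{jj} into e_{ii} M_n(M) e_{jj}; that is, Δ(x) = e_{ii} Δ(x) e_{jj} for every x ∈ A_{ij}. -/
open MulOpposite Matrix

variable (A M : Type*) [NormedRing A] [NormedAlgebra ℂ A] [CompleteSpace A]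
  [AddCommGroup M] [Module ℂ M] [Module A M] [Module Aᵐᵒᵖ M]
  [SMulCommClass A Aᵐᵒᵖ M] [IsScalarTower ℂ A M] [IsScalarTower ℂ Aᵐᵒᵖ M]

/-- `D : A → M` is a derivation from the Banach algebra `A` into the unital
`A`-bimodule `M`: a `ℂ`-linear map with the Leibniz rule (the right action of
`A` on `M` is written via `Aᵐᵒᵖ`). -/
def IsDerivation (D : A → M) : Prop :=
  IsLinearMap ℂ D ∧ ∀ x y : A, D (x * y) = op y • D x + x • D y

variable {n : ℕ}

/-- The left action of `Mₙ(A)` on `Mₙ(M)`: `(x · Y)_{ij} = Σ_k x_{ik} · Y_{kj}`. -/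
def matL (x : Matrix (Fin n) (Fin n) A) (Y : Matrix (Fin n) (Fin n) M) :
    Matrix (Fin n) (Fin n) M :=
  Matrix.of fun i j => ∑ k, x i k • Y k j

/-- The right action of `Mₙ(A)` on `Mₙ(M)`: `(Y · x)_{ij} = Σ_k Y_{ik} · x_{kj}`. -/
def matR (Y : Matrix (Fin n) (Fin n) M) (x : Matrix (Fin n) (Fin n) A) :
    Matrix (Fin n) (Fin n) M :=
  Matrix.of fun i j => ∑ k, op (x k j) • Y i k

/-- A derivation from `Mₙ(A)` into the `Mₙ(A)`-bimodule `Mₙ(M)`. -/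
def IsMatDerivation (D : Matrix (Fin n) (Fin n) A → Matrix (Fin n) (Fin n) M) : Prop :=
  IsLinearMap ℂ D ∧
    ∀ x y : Matrix (Fin n) (Fin n) A, D (x * y) = matR A M (D x) y + matL A M x (D y)

/-- A 2-local derivation from `Mₙ(A)` into `Mₙ(M)`: for each pair of points there
is a derivation agreeing with `Δ` at both of them. -/
def Is2LocalMatDerivation (Δ : Matrix (Fin n) (Fin n) A → Matrix (Fin n) (Fin n) M) : Prop :=
  ∀ x y : Matrix (Fin n) (Fin n) A,
    ∃ D : Matrix (Fin n) (Fin n) A → Matrix (Fin n) (Fin n) M,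
      IsMatDerivation A M D ∧ Δ x = D x ∧ Δ y = D y

/-- The matrix unit `e_{ij}`: the unit of `A` at position `(i,j)`, zeros elsewhere. -/
def matUnit (i j : Fin n) : Matrix (Fin n) (Fin n) A :=
  Matrix.single i j 1

/-- The linear span of the matrix units `{e_{ij}}`. -/
noncomputable def unitSpan (n : ℕ) : Submodule ℂ (Matrix (Fin n) (Fin n) A) :=
  Submodule.span ℂ (Set.range fun p : Fin n × Fin n => Matrix.single p.1 p.2 (1 : A))

/-- The set `Dₙ(A)` of diagonal matrices in `Mₙ(A)`. -/
def diagSet (n : ℕ) : Set (Matrix (Fin n) (Fin n) A) :=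
  {x | ∀ i j : Fin n, i ≠ j → x i j = 0}

/-!
For `x` in the corner `A_{ij}` we have `e_{ii} x = x = x e_{jj}`. A derivation `D` agreeing with
`Δ` at `x` and at `e_{ii}` kills `e_{ii}`, so the Leibniz rule gives
`Δ x = D (e_{ii} x) = D(e_{ii}) x + e_{ii} D(x) = e_{ii} Δ x`; symmetrically `Δ x = Δ x e_{jj}`.
-/

section

variable {A M : Type*} [NormedRing A] [AddCommGroup M]

theorem matUnit_mul_self (i : Fin n) : matUnit A i i * matUnit A i i = matUnit A i i := by
  simp [matUnit]

theorem matUnit_mem_unitSpan [NormedAlgebra ℂ A] (i j : Fin n) : matUnit A i j ∈ unitSpan A n :=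
  Submodule.subset_span ⟨(i, j), rfl⟩

theorem matL_zero [Module A M] (x : Matrix (Fin n) (Fin n) A) : matL A M x 0 = 0 := by
  ext; simp [matL]

theorem matR_zero [Module Aᵐᵒᵖ M] (x : Matrix (Fin n) (Fin n) A) : matR A M 0 x = 0 := by
  ext; simp [matR]

variable [NormedAlgebra ℂ A] [Module ℂ M] [Module A M] [Module Aᵐᵒᵖ M]
  {D Δ : Matrix (Fin n) (Fin n) A → Matrix (Fin n) (Fin n) M}
  {e x : Matrix (Fin n) (Fin n) A}

theorem IsMatDerivation.apply_eq_matL_of_mul_eq (hD : IsMatDerivation A M D) (he : D e = 0)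
    (hx : e * x = x) : D x = matL A M e (D x) := by
  conv_lhs => rw [← hx, hD.2, he, matR_zero, zero_add]

theorem IsMatDerivation.apply_eq_matR_of_mul_eq (hD : IsMatDerivation A M D) (he : D e = 0)
    (hx : x * e = x) : D x = matR A M (D x) e := by
  conv_lhs => rw [← hx, hD.2, he, matL_zero, add_zero]

theorem Is2LocalMatDerivation.apply_eq_matL_of_mul_eq (hΔ : Is2LocalMatDerivation A M Δ)
    (he : Δ e = 0) (hx : e * x = x) : Δ x = matL A M e (Δ x) := by
  obtain ⟨D, hD, hDx, hDe⟩ := hΔ x e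
  rw [hDx]
  exact hD.apply_eq_matL_of_mul_eq (hDe ▸ he) hx

theorem Is2LocalMatDerivation.apply_eq_matR_of_mul_eq (hΔ : Is2LocalMatDerivation A M Δ)
    (he : Δ e = 0) (hx : x * e = x) : Δ x = matR A M (Δ x) e := by
  obtain ⟨D, hD, hDx, hDe⟩ := hΔ x e
  rw [hDx]
  exact hD.apply_eq_matR_of_mul_eq (hDe ▸ he) hx

end

theorem twoLocal_maps_corner_into_corner (n : ℕ)
    (Δ : Matrix (Fin n) (Fin n) A → Matrix (Fin n) (Fin n) M)
    (hΔ : Is2LocalMatDerivation A M Δ)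
    (hvan : ∀ t ∈ unitSpan A n, Δ t = 0) :
    ∀ (i j : Fin n) (x : Matrix (Fin n) (Fin n) A),
      x = matUnit A i i * x * matUnit A j j →
      Δ x = matL A M (matUnit A i i) (matR A M (Δ x) (matUnit A j j)) := by
  intro i j x hx
  have hi : matUnit A i i * x = x := by
    rw [hx, ← mul_assoc, ← mul_assoc, matUnit_mul_self]
  have hj : x * matUnit A j j = x := by
    rw [hx, mul_assoc, matUnit_mul_self]
  have hL := hΔ.apply_eq_matL_of_mul_eq (hvan _ (matUnit_mem_unitSpan i i)) hi
  have hR := hΔ.apply_eq_matR_of_mul_eq (hvan _ (matUnit_mem_unitSpan j j)) hj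
  rwa [← hR]
end

section
/- Let A be a unital complex Banach algebra, M a unital A-bimodule, n ≥ 3, and let Δ be a 2-local derivation from M_n(A) into M_n(M) that vanishes on the linear span of the matrix units {e_{ij}}_{i,j=1}^n. Then for every i with 1 ≤ i ≤ n, the restriction Δ_{ii} of Δ to A_{ii} = e_{ii} M_n(A) e_{ii} is additive: Δ(x + y) = Δ(x) + Δ(y) for all x, y ∈ A_{ii}. -/
/-!
Every derivation `D : Mₙ(A) → Mₙ(M)` is `ad a + δ̄`. For distinct `i, j, k` put
`u = X e_ij + e_ji` and `v = Y e_ik + e_ki`. A direct computation gives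
`D(X e_ii)_ii = D(u)_ij + X·D(u)_ji`, and the cross terms
`D(v)_ij + X·D(v)_ji` and `D(u)_ik + Y·D(u)_ki` cancel, so the `(i,i)` entry of
`D((X+Y) e_ii)` is read off from `D(u + v)`.

A 2-local `Δ` that vanishes on the span of the units satisfies `Δ(z)_pq = 0` whenever
`z_pq = 0`: a derivation killing `diag(0, 1, …, n-1)` has `a` diagonal. In particular the cross
term `D(u)_ik + Y·D(u)_ki` vanishes when `D(u) = Δ(u)`, so comparing `Δ` with derivations at the
pairs `((X+Y) e_ii, u + v)`, `(u + v, u)`, `(u + v, v)`, `(X e_ii, u)`, `(Y e_ii, v)` gives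
additivity at `(i,i)`; every other entry of `Δ` on `A_ii` is zero.
-/

open MulOpposite Matrix

variable (A M : Type*) [NormedRing A] [NormedAlgebra ℂ A] [CompleteSpace A]
  [AddCommGroup M] [Module ℂ M] [Module A M] [Module Aᵐᵒᵖ M]
  [SMulCommClass A Aᵐᵒᵖ M] [IsScalarTower ℂ A M] [IsScalarTower ℂ Aᵐᵒᵖ M]

variable {n : ℕ}

set_option linter.unusedSectionVars false

theorem Fintype.exists_ne_ne_ne {α : Type*} [Fintype α] (h : 3 ≤ Fintype.card α) (i : α) :
    ∃ j k : α, i ≠ j ∧ i ≠ k ∧ j ≠ k := by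
  classical
  have : 1 < (Finset.univ.erase i).card := by
    rw [Finset.card_erase_of_mem (Finset.mem_univ i), Finset.card_univ]
    omega
  obtain ⟨j, hj, k, hk, hjk⟩ := Finset.one_lt_card.1 this
  exact ⟨j, k, (Finset.ne_of_mem_erase hj).symm, (Finset.ne_of_mem_erase hk).symm, hjk⟩

section Development

variable {A M}

theorem matR_single_apply (Y : Matrix (Fin n) (Fin n) M) (r s : Fin n) (c : A) (p q : Fin n) :
    matR A M Y (single r s c) p q = if s = q then op c • Y p r else 0 := by
  by_cases h : s = q <;> simp [matR, single_apply, h, apply_ite op, ite_smul]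

theorem matL_single_apply (r s : Fin n) (c : A) (Y : Matrix (Fin n) (Fin n) M) (p q : Fin n) :
    matL A M (single r s c) Y p q = if r = p then c • Y s q else 0 := by
  by_cases h : r = p <;> simp [matL, single_apply, h]

theorem matR_zero_left (x : Matrix (Fin n) (Fin n) A) : matR A M 0 x = 0 := by
  ext p q
  simp [matR]

theorem matL_zero_right (x : Matrix (Fin n) (Fin n) A) : matL A M x 0 = 0 := by
  ext p q
  simp [matL]

theorem matR_matR (Y : Matrix (Fin n) (Fin n) M) (x y : Matrix (Fin n) (Fin n) A) :
    matR A M (matR A M Y x) y = matR A M Y (x * y) := by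
  ext p q
  simp only [matR, of_apply, mul_apply, Finset.smul_sum, smul_smul, ← op_mul, Finset.op_sum,
    Finset.sum_smul]
  exact Finset.sum_comm

theorem matL_matL (x y : Matrix (Fin n) (Fin n) A) (Y : Matrix (Fin n) (Fin n) M) :
    matL A M (x * y) Y = matL A M x (matL A M y Y) := by
  ext p q
  simp only [matL, of_apply, mul_apply, Finset.smul_sum, smul_smul, Finset.sum_smul]
  exact Finset.sum_comm

theorem matL_matR (x : Matrix (Fin n) (Fin n) A) (Y : Matrix (Fin n) (Fin n) M)
    (y : Matrix (Fin n) (Fin n) A) :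
    matL A M x (matR A M Y y) = matR A M (matL A M x Y) y := by
  ext p q
  simp only [matL, matR, of_apply, Finset.smul_sum, smul_comm (x _ _)]
  exact Finset.sum_comm

theorem matR_sub_left (Y Z : Matrix (Fin n) (Fin n) M) (x : Matrix (Fin n) (Fin n) A) :
    matR A M (Y - Z) x = matR A M Y x - matR A M Z x := by
  ext p q
  simp [matR, Finset.sum_sub_distrib, smul_sub]

theorem matL_sub_right (x : Matrix (Fin n) (Fin n) A) (Y Z : Matrix (Fin n) (Fin n) M) :
    matL A M x (Y - Z) = matL A M x Y - matL A M x Z := by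
  ext p q
  simp [matL, Finset.sum_sub_distrib, smul_sub]

theorem matR_add_right (Y : Matrix (Fin n) (Fin n) M) (x y : Matrix (Fin n) (Fin n) A) :
    matR A M Y (x + y) = matR A M Y x + matR A M Y y := by
  ext p q
  simp [matR, Finset.sum_add_distrib, add_smul]

theorem matL_add_left (x y : Matrix (Fin n) (Fin n) A) (Y : Matrix (Fin n) (Fin n) M) :
    matL A M (x + y) Y = matL A M x Y + matL A M y Y := by
  ext p q
  simp [matL, Finset.sum_add_distrib, add_smul]

theorem matR_smul_right (Y : Matrix (Fin n) (Fin n) M) (c : ℂ) (x : Matrix (Fin n) (Fin n) A) :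
    matR A M Y (c • x) = c • matR A M Y x := by
  ext p q
  simp [matR, Finset.smul_sum, smul_assoc]

theorem matL_smul_left (c : ℂ) (x : Matrix (Fin n) (Fin n) A) (Y : Matrix (Fin n) (Fin n) M) :
    matL A M (c • x) Y = c • matL A M x Y := by
  ext p q
  simp [matL, Finset.smul_sum, smul_assoc]

def matAd (a : Matrix (Fin n) (Fin n) M) (x : Matrix (Fin n) (Fin n) A) :
    Matrix (Fin n) (Fin n) M :=
  matR A M a x - matL A M x a

theorem matAd_single_apply (a : Matrix (Fin n) (Fin n) M) (r s : Fin n) (c : A) (p q : Fin n) :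
    matAd a (single r s c) p q
      = (if s = q then op c • a p r else 0) - (if r = p then c • a s q else 0) := by
  rw [matAd, Matrix.sub_apply, matR_single_apply, matL_single_apply]

theorem IsDerivation.map_one {δ : A → M} (hδ : IsDerivation A M δ) : δ 1 = 0 := by
  have h := hδ.2 1 1
  rw [mul_one, op_one, one_smul, one_smul] at h
  exact left_eq_add.mp h

theorem isDerivation_zero : IsDerivation A M 0 :=
  ⟨(0 : A →ₗ[ℂ] M).isLinear, fun _ _ => by simp⟩

theorem isMatDerivation_matAd (a : Matrix (Fin n) (Fin n) M) : IsMatDerivation A M (matAd a) :=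
  ⟨⟨fun x y => by simp only [matAd, matR_add_right, matL_add_left]; abel,
    fun c x => by simp only [matAd, matR_smul_right, matL_smul_left, smul_sub]⟩,
   fun x y => by
    simp only [matAd, matR_sub_left, matL_sub_right, matR_matR, matL_matL, matL_matR]
    abel⟩

theorem matAd_add (a : Matrix (Fin n) (Fin n) M) (x y : Matrix (Fin n) (Fin n) A) :
    matAd a (x + y) = matAd a x + matAd a y :=
  (isMatDerivation_matAd a).1.map_add x y

namespace IsMatDerivation

variable {D D' : Matrix (Fin n) (Fin n) A → Matrix (Fin n) (Fin n) M}

theorem sub (hD : IsMatDerivation A M D) (hD' : IsMatDerivation A M D') :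
    IsMatDerivation A M fun x => D x - D' x :=
  ⟨(hD.1.mk' D - hD'.1.mk' D').isLinear, fun x y => by
    simp only [hD.2, hD'.2, matR_sub_left, matL_sub_right]
    abel⟩

theorem apply_single_one_self_apply_self (hD : IsMatDerivation A M D) (u : Fin n) :
    D (single u u 1) u u = 0 := by
  have h := congr_fun₂ (hD.2 (single u u 1) (single u u 1)) u u
  simp only [single_mul_single_same, mul_one, Matrix.add_apply, matR_single_apply,
    matL_single_apply, if_true, op_one, one_smul] at h
  exact left_eq_add.mp h

theorem apply_single_one_apply (hD : IsMatDerivation A M D) (u p q r s : Fin n) :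
    D (single p q 1) r s
      = (if q = s then D (single p u 1) r u else 0)
        - (if p = r then D (single s u 1) q u else 0) := by
  have hfactor := congr_fun₂ (hD.2 (single p u 1) (single u q 1)) r s
  have hswap := congr_fun₂ (hD.2 (single u q 1) (single s u 1)) u u
  have hleft : D (single u q 1 * single s u 1) u u = 0 := by
    by_cases hqs : q = s
    · subst hqs
      simp only [single_mul_single_same, mul_one, hD.apply_single_one_self_apply_self]
    · simp [hqs, hD.1.map_zero]
  simp only [single_mul_single_same, mul_one, Matrix.add_apply, matR_single_apply,
    matL_single_apply, if_true, op_one, one_smul, hleft] at hfactor hswap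
  rw [hfactor, eq_neg_of_add_eq_zero_right hswap.symm]
  split_ifs <;> simp [sub_eq_add_neg]

theorem exists_apply_single_one_eq_matAd (hD : IsMatDerivation A M D) (u : Fin n) :
    ∃ a : Matrix (Fin n) (Fin n) M,
      ∀ p q, D (single p q (1 : A)) = matAd a (single p q (1 : A)) :=
  ⟨of fun p q => D (single q u (1 : A)) p u, fun p q => by
    ext r s
    rw [hD.apply_single_one_apply u p q r s, matAd_single_apply]
    simp⟩

theorem eq_map_of_apply_single_one_eq_zero (hD : IsMatDerivation A M D)
    (h0 : ∀ p q, D (single p q 1) = 0) (u : Fin n) (z : Matrix (Fin n) (Fin n) A) :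
    D z = z.map fun c => D (single u u c) u u := by
  ext p q
  have key : D (single u u (z p q))
      = matR A M (matL A M (single u p 1) (D z)) (single q u 1) := by
    rw [← one_mul (z p q), ← mul_one (1 * z p q), ← single_mul_mul_single, hD.2, hD.2, h0, h0,
      matR_zero_left, matL_zero_right, zero_add, add_zero]
  simp [key, matR_single_apply, matL_single_apply]

theorem isDerivation_apply_single_apply (hD : IsMatDerivation A M D) (u : Fin n) :
    IsDerivation A M fun c => D (single u u c) u u :=
  ⟨⟨fun c d => by simp [single_add, hD.1.map_add],
    fun k c => by simp [← smul_single, hD.1.map_smul]⟩,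
   fun c d => by
    have h := congr_fun₂ (hD.2 (single u u c) (single u u d)) u u
    simpa [matR_single_apply, matL_single_apply] using h⟩

theorem exists_eq_matAd_add_map (hD : IsMatDerivation A M D) :
    ∃ (a : Matrix (Fin n) (Fin n) M) (δ : A → M),
      IsDerivation A M δ ∧ D = fun z => matAd a z + z.map δ := by
  cases isEmpty_or_nonempty (Fin n) with
  | inl _ => exact ⟨0, 0, isDerivation_zero, funext fun _ => Subsingleton.elim _ _⟩
  | inr hne =>
    obtain ⟨u⟩ := hne
    obtain ⟨a, ha⟩ := hD.exists_apply_single_one_eq_matAd u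
    have hD' := hD.sub (isMatDerivation_matAd a)
    refine ⟨a, _, hD'.isDerivation_apply_single_apply u, funext fun z => ?_⟩
    rw [← hD'.eq_map_of_apply_single_one_eq_zero (fun p q => sub_eq_zero.2 (ha p q)) u z]
    abel

end IsMatDerivation

def offDiagLift (i j : Fin n) (X : A) : Matrix (Fin n) (Fin n) A :=
  single i j X + single j i 1

def cornerEval (i j : Fin n) (X : A) (W : Matrix (Fin n) (Fin n) M) : M :=
  W i j + X • W j i

theorem cornerEval_add (i j : Fin n) (X : A) (W W' : Matrix (Fin n) (Fin n) M) :
    cornerEval i j X (W + W') = cornerEval i j X W + cornerEval i j X W' := by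
  simp only [cornerEval, Matrix.add_apply, smul_add]
  abel

noncomputable def indexDiagonal (n : ℕ) : Matrix (Fin n) (Fin n) A :=
  ∑ r : Fin n, ((r : ℕ) : ℂ) • single r r (1 : A)

theorem indexDiagonal_mem_unitSpan : indexDiagonal n ∈ unitSpan A n :=
  Submodule.sum_mem _ fun r _ => Submodule.smul_mem _ _ (Submodule.subset_span ⟨(r, r), rfl⟩)

theorem indexDiagonal_apply (p q : Fin n) :
    indexDiagonal n p q = if p = q then ((p : ℕ) : ℂ) • (1 : A) else 0 := by
  by_cases h : p = q
  · simp [indexDiagonal, Matrix.sum_apply, single_apply, h]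
  · simp only [indexDiagonal, Matrix.sum_apply, Matrix.smul_apply, single_apply, if_neg h]
    exact Finset.sum_eq_zero fun r _ => by rw [if_neg fun hr => h (hr.1.symm.trans hr.2), smul_zero]

namespace IsMatDerivation

variable {D : Matrix (Fin n) (Fin n) A → Matrix (Fin n) (Fin n) M} {i j k : Fin n}

theorem apply_single_self_apply_self (hD : IsMatDerivation A M D) (hij : i ≠ j) (X : A) :
    D (single i i X) i i = cornerEval i j X (D (offDiagLift i j X)) := by
  obtain ⟨a, δ, hδ, rfl⟩ := hD.exists_eq_matAd_add_map
  simp [cornerEval, offDiagLift, matAd_add, matAd_single_apply, hij, hij.symm, hδ.map_one,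
    smul_sub]
  abel

theorem cornerEval_add_cornerEval (hD : IsMatDerivation A M D) (hij : i ≠ j) (hik : i ≠ k)
    (hjk : j ≠ k) (X Y : A) :
    cornerEval i j X (D (offDiagLift i k Y)) + cornerEval i k Y (D (offDiagLift i j X)) = 0 := by
  obtain ⟨a, δ, hδ, rfl⟩ := hD.exists_eq_matAd_add_map
  simp [cornerEval, offDiagLift, matAd_add, matAd_single_apply, hij, hij.symm, hik, hik.symm, hjk,
    hjk.symm, hδ.1.map_zero]

theorem apply_single_add_apply_self (hD : IsMatDerivation A M D) (hij : i ≠ j) (hik : i ≠ k)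
    (hjk : j ≠ k) (X Y : A) :
    D (single i i (X + Y)) i i
      = cornerEval i j X (D (offDiagLift i j X + offDiagLift i k Y))
        + cornerEval i k Y (D (offDiagLift i j X + offDiagLift i k Y)) := by
  rw [single_add, hD.1.map_add, Matrix.add_apply, hD.apply_single_self_apply_self hij,
    hD.apply_single_self_apply_self hik, hD.1.map_add, cornerEval_add, cornerEval_add]
  linear_combination (norm := abel_nf) -(hD.cornerEval_add_cornerEval hij hik hjk X Y)

theorem apply_eq_zero_of_apply_eq_zero (hD : IsMatDerivation A M D)
    (hs : D (indexDiagonal n) = 0) {z : Matrix (Fin n) (Fin n) A} {p q : Fin n}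
    (hz : z p q = 0) : D z p q = 0 := by
  obtain ⟨a, δ, hδ, rfl⟩ := hD.exists_eq_matAd_add_map
  have ha : ∀ p q, p ≠ q → a p q = 0 := by
    intro p q hpq
    have h := congr_fun₂ hs p q
    simpa [matAd, matR, matL, indexDiagonal_apply, hpq, hδ.1.map_zero, apply_ite op, ite_smul,
      smul_assoc, ← sub_smul, sub_eq_zero, Fin.val_eq_val, hpq.symm] using h
  have hR : matR A M a z p q = 0 := by
    simp only [matR, of_apply]
    refine Finset.sum_eq_zero fun t _ => ?_
    by_cases ht : t = p
    · simp [ht, hz]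
    · simp [ha p t (Ne.symm ht)]
  have hL : matL A M z a p q = 0 := by
    simp only [matL, of_apply]
    refine Finset.sum_eq_zero fun t _ => ?_
    by_cases ht : t = q
    · simp [ht, hz]
    · simp [ha t q ht]
  simp [matAd, hR, hL, hz, hδ.1.map_zero]

end IsMatDerivation

namespace Is2LocalMatDerivation

variable {Δ : Matrix (Fin n) (Fin n) A → Matrix (Fin n) (Fin n) M} {i j k : Fin n}

theorem apply_eq_zero_of_apply_eq_zero (hΔ : Is2LocalMatDerivation A M Δ)
    (hvan : ∀ t ∈ unitSpan A n, Δ t = 0) {z : Matrix (Fin n) (Fin n) A} {p q : Fin n}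
    (hz : z p q = 0) : Δ z p q = 0 := by
  obtain ⟨D, hD, hzD, hsD⟩ := hΔ z (indexDiagonal n)
  rw [hzD]
  exact hD.apply_eq_zero_of_apply_eq_zero (hsD ▸ hvan _ indexDiagonal_mem_unitSpan) hz

theorem apply_single_self_apply_self (hΔ : Is2LocalMatDerivation A M Δ) (hij : i ≠ j) (X : A) :
    Δ (single i i X) i i = cornerEval i j X (Δ (offDiagLift i j X)) := by
  obtain ⟨D, hD, h₁, h₂⟩ := hΔ (single i i X) (offDiagLift i j X)
  rw [h₁, h₂]
  exact hD.apply_single_self_apply_self hij X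

theorem cornerEval_apply_add (hΔ : Is2LocalMatDerivation A M Δ)
    (hvan : ∀ t ∈ unitSpan A n, Δ t = 0) (hij : i ≠ j) (hik : i ≠ k) (hjk : j ≠ k)
    (X Y : A) :
    cornerEval i j X (Δ (offDiagLift i j X + offDiagLift i k Y))
      = cornerEval i j X (Δ (offDiagLift i j X)) := by
  have hvanish : cornerEval i k Y (Δ (offDiagLift i j X)) = 0 := by
    rw [cornerEval, hΔ.apply_eq_zero_of_apply_eq_zero hvan,
      hΔ.apply_eq_zero_of_apply_eq_zero hvan, smul_zero, add_zero]
    all_goals simp [offDiagLift, hik, hjk, hij.symm]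
  obtain ⟨D, hD, hw, hu⟩ := hΔ (offDiagLift i j X + offDiagLift i k Y) (offDiagLift i j X)
  have hcross := hD.cornerEval_add_cornerEval hij hik hjk X Y
  rw [← hu, hvanish, add_zero] at hcross
  rw [hw, hD.1.map_add, cornerEval_add, hcross, add_zero, hu]

theorem apply_single_add_apply_self (hΔ : Is2LocalMatDerivation A M Δ)
    (hvan : ∀ t ∈ unitSpan A n, Δ t = 0) (hij : i ≠ j) (hik : i ≠ k) (hjk : j ≠ k)
    (X Y : A) :
    Δ (single i i (X + Y)) i i = Δ (single i i X) i i + Δ (single i i Y) i i := by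
  obtain ⟨D, hD, h₁, h₂⟩ := hΔ (single i i (X + Y)) (offDiagLift i j X + offDiagLift i k Y)
  rw [h₁, hD.apply_single_add_apply_self hij hik hjk, ← h₂,
    hΔ.cornerEval_apply_add hvan hij hik hjk, add_comm (offDiagLift i j X),
    hΔ.cornerEval_apply_add hvan hik hij hjk.symm, hΔ.apply_single_self_apply_self hij,
    hΔ.apply_single_self_apply_self hik]

end Is2LocalMatDerivation

end Development

/-- if a 2-local derivation `Δ : Mₙ(A) → Mₙ(M)` (`n ≥ 3`) vanishes on the
span of the matrix units, then the restriction of `Δ` to each corner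
`A_{ii} = e_{ii} Mₙ(A) e_{ii}` is additive. -/
theorem twoLocal_corner_additive (n : ℕ) (hn : 3 ≤ n)
    (Δ : Matrix (Fin n) (Fin n) A → Matrix (Fin n) (Fin n) M)
    (hΔ : Is2LocalMatDerivation A M Δ)
    (hvan : ∀ t ∈ unitSpan A n, Δ t = 0) :
    ∀ (i : Fin n) (x y : Matrix (Fin n) (Fin n) A),
      x = matUnit A i i * x * matUnit A i i →
      y = matUnit A i i * y * matUnit A i i →
      Δ (x + y) = Δ x + Δ y := by
  intro i x y hx hy
  obtain ⟨j, k, hij, hik, hjk⟩ := Fintype.exists_ne_ne_ne (by simpa using hn) i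
  simp only [matUnit, single_mul_mul_single, one_mul, mul_one] at hx hy
  rw [hx, hy, ← single_add]
  ext p q
  by_cases hpq : p = i ∧ q = i
  · obtain ⟨rfl, rfl⟩ := hpq
    exact hΔ.apply_single_add_apply_self hvan hij hik hjk _ _
  · have hzero (X : A) : single i i X p q = 0 :=
      if_neg fun h => hpq ⟨h.1.symm, h.2.symm⟩
    simp only [Matrix.add_apply, hΔ.apply_eq_zero_of_apply_eq_zero hvan (hzero _), add_zero]
end
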